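/- arXiv:1206.1369 — 3 statements merged into one kernel-verified Lean document; each statement's English description precedes it below -/
import Mathlib

section
/- Let f : [0,T] → [0,∞) be continuous with f(0) = 0 and suppose f(t) ≤ C·∫₀ᵗ (t-s)^{-1/2} f(s) ds for all t ∈ (0,T], where C ≥ 0. Then f ≡ 0 on [0,T]. -/
/-!
If `f` already vanishes on `[0, a]`, look at a point `t₀` where `f` is maximal on
`[0, a + δ]`. Only `[a, t₀]` contributes to the integral, and there the kernel
integrates to `2 √(t₀ - a)`, so `f t₀ ≤ 2 C √δ f t₀`. For `δ` so small that
`2 C √δ < 1` this forces `f t₀ = 0`, hence `f = 0` on `[0, a + δ]`; finitely many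
steps of length `δ` cover `[0, T]`. The argument works for any kernel `(t - s) ^ r`
with `-1 < r`.
-/

open MeasureTheory Set Filter Topology

lemma intervalIntegrable_sub_rpow {r : ℝ} (hr : -1 < r) (t a b : ℝ) :
    IntervalIntegrable (fun s => (t - s) ^ r) volume a b := by
  simpa using
    (intervalIntegral.intervalIntegrable_rpow' (a := t - a) (b := t - b) hr).comp_sub_left t

lemma integral_sub_rpow {r : ℝ} (hr : -1 < r) (a t : ℝ) :
    ∫ s in a..t, (t - s) ^ r = (t - a) ^ (r + 1) / (r + 1) := by
  rw [intervalIntegral.integral_comp_sub_left (fun u => u ^ r) t, sub_self,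
    integral_rpow (Or.inl hr), Real.zero_rpow (by linarith), sub_zero]

lemma integral_sub_rpow_mul_le {r c a t B : ℝ} {f : ℝ → ℝ} (hr : -1 < r) (hca : c ≤ a)
    (hat : a ≤ t) (hcont : ContinuousOn f (Icc c t)) (hzero : ∀ s ∈ Icc c a, f s = 0)
    (hB : ∀ s ∈ Icc a t, f s ≤ B) :
    ∫ s in c..t, (t - s) ^ r * f s ≤ (t - a) ^ (r + 1) / (r + 1) * B := by
  have hint : ∀ {x y}, c ≤ x → x ≤ y → y ≤ t →
      IntervalIntegrable (fun s => (t - s) ^ r * f s) volume x y := fun hcx hxy hyt =>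
    (intervalIntegrable_sub_rpow hr t _ _).mul_continuousOn
      (hcont.mono (by rw [uIcc_of_le hxy]; exact Icc_subset_Icc hcx hyt))
  have hvanish : ∫ s in c..a, (t - s) ^ r * f s = 0 := by
    rw [intervalIntegral.integral_congr (g := fun _ => 0) fun s hs => by
      simp [hzero s (by rwa [uIcc_of_le hca] at hs)]]
    simp
  calc ∫ s in c..t, (t - s) ^ r * f s
      = ∫ s in a..t, (t - s) ^ r * f s := by
        rw [← intervalIntegral.integral_add_adjacent_intervals (hint le_rfl hca hat)
          (hint hca hat le_rfl), hvanish, zero_add]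
    _ ≤ ∫ s in a..t, (t - s) ^ r * B :=
        intervalIntegral.integral_mono_on hat (hint hca hat le_rfl)
          ((intervalIntegrable_sub_rpow hr t a t).mul_const B) fun s hs =>
            mul_le_mul_of_nonneg_left (hB s hs) (Real.rpow_nonneg (sub_nonneg.2 hs.2) r)
    _ = (t - a) ^ (r + 1) / (r + 1) * B := by
        rw [intervalIntegral.integral_mul_const, integral_sub_rpow hr]

lemma exists_pos_mul_rpow_div_lt_one (C : ℝ) {p : ℝ} (hp : 0 < p) :
    ∃ δ > 0, C * (δ ^ p / p) < 1 := by
  have hlim : Tendsto (fun δ : ℝ => C * (δ ^ p / p)) (𝓝[>] 0) (𝓝 0) := by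
    have := (((Real.continuousAt_rpow_const 0 p (Or.inr hp.le)).tendsto).div_const p).const_mul C
    simpa [Real.zero_rpow hp.ne'] using this.mono_left nhdsWithin_le_nhds
  obtain ⟨δ, hlt, hpos⟩ :=
    ((hlim.eventually (gt_mem_nhds one_pos)).and self_mem_nhdsWithin).exists
  exact ⟨δ, hpos, hlt⟩

lemma eq_zero_of_le_add_of_singular_gronwall {T r C a δ : ℝ} {f : ℝ → ℝ} (hr : -1 < r)
    (hC : 0 ≤ C) (ha : 0 ≤ a) (hδ : C * (δ ^ (r + 1) / (r + 1)) < 1)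
    (hcont : ContinuousOn f (Icc 0 T)) (hnonneg : ∀ t ∈ Icc 0 T, 0 ≤ f t)
    (hrec : ∀ t ∈ Ioc 0 T, f t ≤ C * ∫ s in (0 : ℝ)..t, (t - s) ^ r * f s)
    (hzero : ∀ t ∈ Icc 0 T, t ≤ a → f t = 0) :
    ∀ t ∈ Icc 0 T, t ≤ a + δ → f t = 0 := by
  intro t ht hta
  have hsub : Icc 0 (min (a + δ) T) ⊆ Icc 0 T := Icc_subset_Icc le_rfl (min_le_right _ _)
  have htb : t ∈ Icc 0 (min (a + δ) T) := ⟨ht.1, le_min hta ht.2⟩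
  obtain ⟨t₀, ht₀, hmax⟩ := isCompact_Icc.exists_isMaxOn ⟨t, htb⟩ (hcont.mono hsub)
  suffices f t₀ = 0 by
    have hle : f t ≤ f t₀ := hmax htb
    linarith [hnonneg t ht]
  rcases le_or_gt t₀ a with hat₀ | hat₀
  · exact hzero t₀ (hsub ht₀) hat₀
  have ht₀T : t₀ ≤ T := (hsub ht₀).2
  have ht₀δ : t₀ - a ≤ δ := by linarith [ht₀.2, min_le_left (a + δ) T]
  have hr1 : 0 < r + 1 := by linarith
  have hnn : 0 ≤ f t₀ := hnonneg t₀ (hsub ht₀)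
  have hbound := integral_sub_rpow_mul_le hr ha hat₀.le
    (hcont.mono (Icc_subset_Icc le_rfl ht₀T))
    (fun s hs => hzero s ⟨hs.1, hs.2.trans (hat₀.le.trans ht₀T)⟩ hs.2)
    (fun s hs => hmax ⟨ha.trans hs.1, hs.2.trans ht₀.2⟩)
  have hpow : (t₀ - a) ^ (r + 1) ≤ δ ^ (r + 1) :=
    Real.rpow_le_rpow (sub_nonneg.2 hat₀.le) ht₀δ hr1.le
  have hself : f t₀ ≤ C * (δ ^ (r + 1) / (r + 1)) * f t₀ :=
    calc f t₀ ≤ C * ∫ s in (0 : ℝ)..t₀, (t₀ - s) ^ r * f s :=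
          hrec t₀ ⟨ha.trans_lt hat₀, ht₀T⟩
      _ ≤ C * ((t₀ - a) ^ (r + 1) / (r + 1) * f t₀) := by gcongr
      _ ≤ C * (δ ^ (r + 1) / (r + 1) * f t₀) := by gcongr
      _ = C * (δ ^ (r + 1) / (r + 1)) * f t₀ := by ring
  nlinarith

theorem stmt_6_general (T : ℝ) (f : ℝ → ℝ)
    (hcont : ContinuousOn f (Set.Icc 0 T))
    (hnonneg : ∀ t ∈ Set.Icc (0 : ℝ) T, 0 ≤ f t)
    (hf0 : f 0 = 0) (C : ℝ) (hC : 0 ≤ C)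
    (hrec : ∀ t ∈ Set.Ioc (0 : ℝ) T,
      f t ≤ C * ∫ s in (0 : ℝ)..t, (t - s) ^ (-(1 / 2) : ℝ) * f s) :
    ∀ t ∈ Set.Icc (0 : ℝ) T, f t = 0 := by
  have hr : (-1 : ℝ) < -(1 / 2) := by norm_num
  obtain ⟨δ, hδ, hCδ⟩ := exists_pos_mul_rpow_div_lt_one C (p := -(1 / 2) + 1) (by norm_num)
  have hvanish : ∀ n : ℕ, ∀ t ∈ Icc 0 T, t ≤ n * δ → f t = 0 := by
    intro n
    induction n with
    | zero =>
      intro t ht ht0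
      rw [le_antisymm (by simpa using ht0) ht.1, hf0]
    | succ n ih =>
      rw [Nat.cast_succ, add_one_mul]
      exact eq_zero_of_le_add_of_singular_gronwall hr hC (by positivity) hCδ hcont hnonneg
        hrec ih
  intro t ht
  obtain ⟨n, hn⟩ := exists_nat_ge (T / δ)
  exact hvanish n t ht (ht.2.trans ((div_le_iff₀ hδ).1 hn))

/-- Singular Gronwall inequality with weakly singular kernel (t-s)^{-1/2}. -/
theorem stmt_6 (T : ℝ) (hT : 0 < T) (f : ℝ → ℝ)
    (hcont : ContinuousOn f (Set.Icc 0 T))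
    (hnonneg : ∀ t ∈ Set.Icc (0 : ℝ) T, 0 ≤ f t)
    (hf0 : f 0 = 0) (C : ℝ) (hC : 0 ≤ C)
    (hrec : ∀ t ∈ Set.Ioc (0 : ℝ) T,
      f t ≤ C * ∫ s in (0 : ℝ)..t, (t - s) ^ (-(1 / 2) : ℝ) * f s) :
    ∀ t ∈ Set.Icc (0 : ℝ) T, f t = 0 :=
  stmt_6_general T f hcont hnonneg hf0 C hC hrec
end

section
/- Let φ₀ : ℝ → (0, ∞) be continuous with φ₀ ≡ 1 on [-1,1], φ₀ increasing on (-∞,-1), decreasing on (1,∞), and such that (1/φ₀(x) - 1)² ≤ P(|x|) for a polynomial P. Let g : ℝ → ℝ satisfy |g(x)| ≤ K e^{-α|x|} for some K, α > 0. Then there exists C_v ≥ 1, independent of a ≥ 0 and L₀ := a + C_v, such that for all shifts τ ∈ [0, a], ∫_ℝ [(1/φ₀(x/L₀) - 1)·g(x - τ)]² dx ≤ 1. -/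
/-!
Where `|x| ≤ L := a + C` the argument `x / L` lies in `[-1, 1]` and the cutoff error vanishes.
Beyond, the polynomial bound gives `(1/φ₀(x/L) - 1)² ≤ D e^{α|x/L|}`, and the geometry of the
shift gives `|x/L| - |x - τ| ≤ 1 - C`. Spending one factor `e^{-α|x-τ|}` of `g(x-τ)²` on this
difference, the integrand is at most `D K² e^{α(1-C)} e^{-α|x-τ|}`, whose integral
`2 D K² e^{α(1-C)} / α` does not depend on `a` or `τ` and is small for large `C`.
-/

open MeasureTheory Set Real

theorem integral_exp_neg_mul_abs {α : ℝ} (hα : 0 < α) : ∫ x : ℝ, exp (-α * |x|) = 2 / α := by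
  rw [integral_comp_abs (f := fun t => exp (-α * t)), integral_exp_mul_Ioi (neg_lt_zero.2 hα)]
  field_simp
  simp

theorem integral_exp_neg_mul_abs_sub {α : ℝ} (hα : 0 < α) (τ : ℝ) :
    ∫ x : ℝ, exp (-α * |x - τ|) = 2 / α :=
  (integral_sub_right_eq_self (fun x => exp (-α * |x|)) τ).trans (integral_exp_neg_mul_abs hα)

theorem integrable_exp_neg_mul_abs_sub {α : ℝ} (hα : 0 < α) (τ : ℝ) :
    Integrable fun x : ℝ => exp (-α * |x - τ|) :=
  .of_integral_ne_zero (by rw [integral_exp_neg_mul_abs_sub hα]; positivity)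

theorem pow_le_factorial_div_pow_mul_exp {α y : ℝ} (hα : 0 < α) (hy : 0 ≤ y) (n : ℕ) :
    y ^ n ≤ n.factorial / α ^ n * exp (α * y) := by
  have h := pow_div_factorial_le_exp (x := α * y) (by positivity) n
  rw [div_le_iff₀ (by positivity), mul_pow] at h
  rw [div_mul_eq_mul_div, le_div_iff₀ (by positivity)]
  linarith

theorem Polynomial.exists_eval_le_mul_exp (P : Polynomial ℝ) {α : ℝ} (hα : 0 < α) :
    ∃ D : ℝ, ∀ y : ℝ, 0 ≤ y → P.eval y ≤ D * exp (α * y) := by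
  refine ⟨∑ i ∈ Finset.range (P.natDegree + 1), |P.coeff i| * (i.factorial / α ^ i),
    fun y hy => ?_⟩
  rw [P.eval_eq_sum_range, Finset.sum_mul]
  refine Finset.sum_le_sum fun i _ => ?_
  rw [mul_assoc]
  exact mul_le_mul (le_abs_self _) (pow_le_factorial_div_pow_mul_exp hα hy i)
    (by positivity) (abs_nonneg _)

theorem abs_div_sub_abs_sub_le {a C τ x : ℝ} (hC : 1 ≤ C) (hτ : τ ∈ Icc 0 a)
    (hx : a + C ≤ |x|) : |x / (a + C)| - |x - τ| ≤ 1 - C := by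
  obtain ⟨hτ0, hτa⟩ := hτ
  have hL : 0 < a + C := by linarith
  have hdiv : |x / (a + C)| ≤ 1 + (|x| - (a + C)) := by
    rw [abs_div, abs_of_pos hL, div_le_iff₀ hL]
    nlinarith
  have hshift : |x| - τ ≤ |x - τ| := by
    simpa [abs_of_nonneg hτ0] using abs_sub_abs_le_abs_sub x τ
  linarith

theorem sq_cutoff_mul_le {f g : ℝ → ℝ} {D K α a C τ : ℝ} (hα : 0 < α) (hC : 1 ≤ C)
    (hτ : τ ∈ Icc 0 a) (hf0 : ∀ y ∈ Icc (-1 : ℝ) 1, f y = 0)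
    (hf : ∀ y, f y ^ 2 ≤ D * exp (α * |y|)) (hg : ∀ x, |g x| ≤ K * exp (-α * |x|)) (x : ℝ) :
    (f (x / (a + C)) * g (x - τ)) ^ 2 ≤ D * K ^ 2 * exp (α * (1 - C)) * exp (-α * |x - τ|) := by
  have hD : 0 ≤ D := by simpa using (sq_nonneg _).trans (hf 0)
  have hL : 0 < a + C := by linarith [hτ.1, hτ.2]
  rcases le_or_gt |x| (a + C) with hx | hx
  · have hmem : x / (a + C) ∈ Icc (-1 : ℝ) 1 := by
      rw [mem_Icc, ← abs_le, abs_div, abs_of_pos hL, div_le_one hL]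
      exact hx
    rw [hf0 _ hmem, zero_mul, sq, zero_mul]
    positivity
  have hgx : g (x - τ) ^ 2 ≤ K ^ 2 * exp (-α * |x - τ|) ^ 2 := by
    rw [← sq_abs, ← mul_pow]
    exact pow_le_pow_left₀ (abs_nonneg _) (hg _) 2
  have hexp : α * |x / (a + C)| + -α * |x - τ| ≤ α * (1 - C) := by
    have := abs_div_sub_abs_sub_le hC hτ hx.le
    nlinarith
  calc (f (x / (a + C)) * g (x - τ)) ^ 2
      = f (x / (a + C)) ^ 2 * g (x - τ) ^ 2 := mul_pow _ _ _
    _ ≤ D * exp (α * |x / (a + C)|) * (K ^ 2 * exp (-α * |x - τ|) ^ 2) :=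
        mul_le_mul (hf _) hgx (sq_nonneg _) ((sq_nonneg _).trans (hf _))
    _ = D * K ^ 2 * exp (α * |x / (a + C)| + -α * |x - τ|) * exp (-α * |x - τ|) := by
        rw [exp_add]; ring
    _ ≤ D * K ^ 2 * exp (α * (1 - C)) * exp (-α * |x - τ|) := by gcongr

theorem integral_sq_cutoff_mul_le {f g : ℝ → ℝ} {D K α a C τ : ℝ} (hα : 0 < α) (hC : 1 ≤ C)
    (hτ : τ ∈ Icc 0 a) (hf0 : ∀ y ∈ Icc (-1 : ℝ) 1, f y = 0)
    (hf : ∀ y, f y ^ 2 ≤ D * exp (α * |y|)) (hg : ∀ x, |g x| ≤ K * exp (-α * |x|)) :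
    ∫ x, (f (x / (a + C)) * g (x - τ)) ^ 2 ≤ 2 * D * K ^ 2 / α * exp (α * (1 - C)) :=
  calc ∫ x, (f (x / (a + C)) * g (x - τ)) ^ 2
      ≤ ∫ x, D * K ^ 2 * exp (α * (1 - C)) * exp (-α * |x - τ|) :=
        integral_mono_of_nonneg (.of_forall fun _ => sq_nonneg _)
          ((integrable_exp_neg_mul_abs_sub hα τ).const_mul _)
          (.of_forall (sq_cutoff_mul_le hα hC hτ hf0 hf hg))
    _ = 2 * D * K ^ 2 / α * exp (α * (1 - C)) := by
        rw [integral_const_mul, integral_exp_neg_mul_abs_sub hα]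
        ring

theorem exists_one_le_mul_exp_le_one (c : ℝ) {α : ℝ} (hα : 0 < α) :
    ∃ C : ℝ, 1 ≤ C ∧ c * exp (α * (1 - C)) ≤ 1 := by
  refine ⟨1 + |c| / α, by simp; positivity, ?_⟩
  have hc : c ≤ exp |c| := (le_abs_self c).trans ((le_add_of_nonneg_right zero_le_one).trans
    (add_one_le_exp _))
  rw [show α * (1 - (1 + |c| / α)) = -|c| by field_simp; ring, exp_neg, ← div_eq_mul_inv,
    div_le_one (exp_pos _)]
  exact hc

theorem stmt_18_general (φ₀ : ℝ → ℝ)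
    (hone : ∀ x ∈ Set.Icc (-1 : ℝ) 1, φ₀ x = 1)
    (P : Polynomial ℝ) (hP : ∀ x : ℝ, (1 / φ₀ x - 1) ^ 2 ≤ P.eval |x|)
    (g : ℝ → ℝ) (K α : ℝ) (hα : 0 < α)
    (hg : ∀ x : ℝ, |g x| ≤ K * Real.exp (-α * |x|)) :
    ∃ Cv : ℝ, 1 ≤ Cv ∧ ∀ a : ℝ, 0 ≤ a → ∀ τ ∈ Set.Icc (0 : ℝ) a,
      ∫ x : ℝ, ((1 / φ₀ (x / (a + Cv)) - 1) * g (x - τ)) ^ 2 ≤ 1 := by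
  obtain ⟨D, hPD⟩ := P.exists_eval_le_mul_exp hα
  obtain ⟨Cv, hCv, hsmall⟩ := exists_one_le_mul_exp_le_one (2 * D * K ^ 2 / α) hα
  refine ⟨Cv, hCv, fun a _ τ hτ => ?_⟩
  refine (integral_sq_cutoff_mul_le (f := fun y => 1 / φ₀ y - 1) hα hCv hτ
    (fun y hy => ?_) (fun y => ?_) hg).trans hsmall
  · simp [hone y hy]
  · exact (hP y).trans (hPD _ (abs_nonneg y))

/-- Uniform smallness of the cutoff error: for φ₀ ≡ 1 on [-1,1], monotone outside,
with (1/φ₀ - 1)² of at most polynomial growth, and g exponentially decaying, there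
is C_v ≥ 1 such that for every a ≥ 0, with L₀ = a + C_v, and every shift τ ∈ [0,a],
∫ ((1/φ₀(x/L₀) - 1) g(x-τ))² dx ≤ 1. -/
theorem stmt_18 (φ₀ : ℝ → ℝ) (hpos : ∀ x, 0 < φ₀ x) (hcont : Continuous φ₀)
    (hone : ∀ x ∈ Set.Icc (-1 : ℝ) 1, φ₀ x = 1)
    (hinc : MonotoneOn φ₀ (Set.Iic (-1 : ℝ)))
    (hdec : AntitoneOn φ₀ (Set.Ici (1 : ℝ)))
    (P : Polynomial ℝ) (hP : ∀ x : ℝ, (1 / φ₀ x - 1) ^ 2 ≤ P.eval |x|)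
    (g : ℝ → ℝ) (K α : ℝ) (hK : 0 < K) (hα : 0 < α)
    (hg : ∀ x : ℝ, |g x| ≤ K * Real.exp (-α * |x|)) :
    ∃ Cv : ℝ, 1 ≤ Cv ∧ ∀ a : ℝ, 0 ≤ a → ∀ τ ∈ Set.Icc (0 : ℝ) a,
      ∫ x : ℝ, ((1 / φ₀ (x / (a + Cv)) - 1) * g (x - τ)) ^ 2 ≤ 1 :=
  stmt_18_general φ₀ hone P hP g K α hα hg
end

section
/- Let f_t(ξ), t ∈ [0,T], be a family of functions with sup_{t∈[0,T]} ∫ (1+ξ²)^m |f_t(ξ)|² dξ < ∞ for every m ≥ 0, and let ψ : ℝ → ℂ be continuous, nonvanishing, with ψ(0) = 1 and 1/|ψ(ξ)| ≤ P(|ξ|) for a polynomial P. Then ∫ |ψ(l ξ)|^{-2} |f_t(ξ)|² dξ → ∫ |f_t(ξ)|² dξ as l → 0+, uniformly in t ∈ [0,T]. -/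
/-!
Write `w = ‖ψ‖⁻²`, so the difference of the two integrals is `∫ (w (l ξ) - 1) |f_t ξ|² dξ`.
Since `w` is continuous at `0` with `w 0 = 1` and of polynomial growth, for small `l` one has
`|w (l ξ) - 1| ≤ a + c (1 + ξ²)^(n+1)` for all `ξ`, with `a, c` as small as we like: on a bounded
set this is continuity at `0`, and outside it the polynomial bound on `w` is absorbed by the one
extra factor `1 + ξ²`. Integrating against `|f_t|²` and using the uniform moment bounds of order
`0` and `n + 1` gives the estimate uniformly in `t`.
-/

open MeasureTheory

lemma abs_le_one_add_sq (x : ℝ) : |x| ≤ 1 + x ^ 2 := by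
  nlinarith [sq_abs x, abs_nonneg x, sq_nonneg (|x| - 1)]

lemma Polynomial.abs_eval_le_mul_one_add_sq_pow (P : Polynomial ℝ) (x : ℝ) :
    |P.eval x| ≤
      (∑ i ∈ Finset.range (P.natDegree + 1), |P.coeff i|) * (1 + x ^ 2) ^ P.natDegree := by
  have hone : 1 ≤ 1 + x ^ 2 := le_add_of_nonneg_right (sq_nonneg x)
  rw [Polynomial.eval_eq_sum_range, Finset.sum_mul]
  refine (Finset.abs_sum_le_sum_abs _ _).trans (Finset.sum_le_sum fun i hi => ?_)
  rw [abs_mul, abs_pow]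
  gcongr
  calc |x| ^ i ≤ (1 + x ^ 2) ^ i := by gcongr; exact abs_le_one_add_sq x
    _ ≤ (1 + x ^ 2) ^ P.natDegree := pow_le_pow_right₀ hone (Finset.mem_range_succ_iff.mp hi)

lemma exists_inv_norm_sq_le_mul_one_add_sq_pow {E : Type*} [NormedAddCommGroup E]
    (ψ : ℝ → E) (P : Polynomial ℝ) (hP : ∀ ξ : ℝ, 1 / ‖ψ ξ‖ ≤ P.eval |ξ|) :
    ∃ (K : ℝ) (n : ℕ), ∀ u : ℝ, |(‖ψ u‖ ^ 2)⁻¹| ≤ K * (1 + u ^ 2) ^ n := by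
  refine ⟨(∑ i ∈ Finset.range (P.natDegree + 1), |P.coeff i|) ^ 2, 2 * P.natDegree, fun u => ?_⟩
  have hpoly := P.abs_eval_le_mul_one_add_sq_pow |u|
  rw [sq_abs] at hpoly
  calc |(‖ψ u‖ ^ 2)⁻¹| = (1 / ‖ψ u‖) ^ 2 := by rw [abs_of_nonneg (by positivity)]; simp
    _ ≤ (P.eval |u|) ^ 2 := by gcongr; exact hP u
    _ = |P.eval (|u|)| ^ 2 := (sq_abs _).symm
    _ ≤ _ := by rw [pow_mul', ← mul_pow]; gcongr

lemma exists_abs_comp_mul_sub_le {w : ℝ → ℝ} (hw : ContinuousAt w 0) {K : ℝ} {n : ℕ}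
    (hK : ∀ u, |w u| ≤ K * (1 + u ^ 2) ^ n) {a c : ℝ} (ha : 0 < a) (hc : 0 < c) :
    ∃ δ > 0, ∀ l : ℝ, |l| < δ → ∀ ξ : ℝ, |w (l * ξ) - w 0| ≤ a + c * (1 + ξ ^ 2) ^ (n + 1) := by
  have hK0 : 0 ≤ K := by simpa using (abs_nonneg _).trans (hK 0)
  obtain ⟨η, hη, hwη⟩ := Metric.continuousAt_iff.mp hw a ha
  refine ⟨min 1 (η * c / (2 * K + 1)), by positivity, fun l hl ξ => ?_⟩
  have hl1 : |l| ≤ 1 := hl.le.trans (min_le_left _ _)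
  have hlη : |l| ≤ η * c / (2 * K + 1) := hl.le.trans (min_le_right _ _)
  have htail : 0 ≤ c * (1 + ξ ^ 2) ^ (n + 1) := by positivity
  by_cases hfar : 2 * K ≤ c * (1 + ξ ^ 2)
  · have hlξ : (l * ξ) ^ 2 ≤ ξ ^ 2 := by
      rw [mul_pow, ← sq_abs l]
      exact mul_le_of_le_one_left (sq_nonneg ξ) (pow_le_one₀ (abs_nonneg l) hl1)
    have hone : 1 ≤ (1 + ξ ^ 2) ^ n := one_le_pow₀ (le_add_of_nonneg_right (sq_nonneg ξ))
    calc |w (l * ξ) - w 0| ≤ |w (l * ξ)| + |w 0| := abs_sub _ _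
      _ ≤ K * (1 + ξ ^ 2) ^ n + K := by
          gcongr
          · exact (hK _).trans (by gcongr)
          · simpa using hK 0
      _ ≤ 2 * K * (1 + ξ ^ 2) ^ n := by linarith [mul_le_mul_of_nonneg_left hone hK0]
      _ ≤ c * (1 + ξ ^ 2) * (1 + ξ ^ 2) ^ n := by gcongr
      _ ≤ a + c * (1 + ξ ^ 2) ^ (n + 1) := by rw [pow_succ (1 + ξ ^ 2) n]; linarith
  · have hξ : c * |ξ| < 2 * K + 1 := by
      linarith [mul_le_mul_of_nonneg_left (abs_le_one_add_sq ξ) hc.le]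
    have hsmall : dist (l * ξ) 0 < η := by
      rw [dist_zero_right, Real.norm_eq_abs, abs_mul]
      calc |l| * |ξ| ≤ η * c / (2 * K + 1) * |ξ| := by gcongr
        _ = η * (c * |ξ|) / (2 * K + 1) := by ring
        _ < η := by rw [div_lt_iff₀ (by positivity)]; gcongr
    have := hwη hsmall
    rw [Real.dist_eq] at this
    linarith

section

variable {α : Type*} [MeasurableSpace α] {μ : Measure α} {v g ρ : α → ℝ} {a c : ℝ}

lemma integrable_mul_of_abs_le_add_mul (hv : AEStronglyMeasurable v μ) (hg : Integrable g μ)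
    (hρg : Integrable (fun x => ρ x * g x) μ) (hg0 : ∀ x, 0 ≤ g x)
    (hvle : ∀ x, |v x| ≤ a + c * ρ x) :
    Integrable (fun x => v x * g x) μ :=
  ((hg.const_mul a).add (hρg.const_mul c)).mono' (hv.mul hg.aestronglyMeasurable)
    (ae_of_all _ fun x => by
      simp only [Pi.add_apply, Real.norm_eq_abs, abs_mul, abs_of_nonneg (hg0 x)]
      linarith [mul_le_mul_of_nonneg_right (hvle x) (hg0 x)])

lemma abs_integral_mul_le_of_abs_le_add_mul (hg : Integrable g μ)
    (hρg : Integrable (fun x => ρ x * g x) μ) (hg0 : ∀ x, 0 ≤ g x)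
    (hvle : ∀ x, |v x| ≤ a + c * ρ x) :
    |∫ x, v x * g x ∂μ| ≤ a * ∫ x, g x ∂μ + c * ∫ x, ρ x * g x ∂μ := by
  rw [← integral_const_mul a, ← integral_const_mul c, ← integral_add (hg.const_mul a)
    (hρg.const_mul c), ← Real.norm_eq_abs]
  refine norm_integral_le_of_norm_le ((hg.const_mul a).add (hρg.const_mul c))
    (ae_of_all _ fun x => ?_)
  simp only [Real.norm_eq_abs, abs_mul, abs_of_nonneg (hg0 x)]
  linarith [mul_le_mul_of_nonneg_right (hvle x) (hg0 x)]

end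

lemma div_two_mul_abs_add_one_mul_le {ε x B : ℝ} (hε : 0 ≤ ε) (hx : x ≤ B) :
    ε / (2 * (|B| + 1)) * x ≤ ε / 2 := by
  calc ε / (2 * (|B| + 1)) * x ≤ ε / (2 * (|B| + 1)) * (|B| + 1) := by
        gcongr; linarith [le_abs_self B]
    _ = ε / 2 := by field_simp

theorem stmt_19_general (T : ℝ) (f : ℝ → ℝ → ℂ)
    (hf : ∀ m : ℕ, ∃ B : ℝ, ∀ t ∈ Set.Icc (0 : ℝ) T,
      Integrable (fun ξ : ℝ => (1 + ξ ^ 2) ^ m * ‖f t ξ‖ ^ 2) ∧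
      ∫ ξ : ℝ, (1 + ξ ^ 2) ^ m * ‖f t ξ‖ ^ 2 ≤ B)
    (ψ : ℝ → ℂ) (hψcont : Continuous ψ) (hψ0 : ψ 0 = 1)
    (P : Polynomial ℝ) (hP : ∀ ξ : ℝ, 1 / ‖ψ ξ‖ ≤ P.eval |ξ|) :
    ∀ ε : ℝ, 0 < ε → ∃ δ : ℝ, 0 < δ ∧ ∀ l : ℝ, 0 < l → l < δ →
      ∀ t ∈ Set.Icc (0 : ℝ) T,
        |(∫ ξ : ℝ, (‖ψ (l * ξ)‖ ^ 2)⁻¹ * ‖f t ξ‖ ^ 2) - ∫ ξ : ℝ, ‖f t ξ‖ ^ 2| ≤ ε := by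
  intro ε hε
  obtain ⟨K, n, hK⟩ := exists_inv_norm_sq_le_mul_one_add_sq_pow ψ P hP
  obtain ⟨B₀, hB₀⟩ := hf 0
  obtain ⟨B, hB⟩ := hf (n + 1)
  have hw : ContinuousAt (fun u => (‖ψ u‖ ^ 2)⁻¹) 0 :=
    (hψcont.norm.pow 2).continuousAt.inv₀ (by simp [hψ0])
  obtain ⟨δ, hδ, hwδ⟩ := exists_abs_comp_mul_sub_le hw hK
    (a := ε / (2 * (|B₀| + 1))) (c := ε / (2 * (|B| + 1))) (by positivity) (by positivity)
  refine ⟨δ, hδ, fun l hl hlδ t ht => ?_⟩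
  obtain ⟨hg, hgB₀⟩ := hB₀ t ht
  obtain ⟨hρg, hρgB⟩ := hB t ht
  simp only [pow_zero, one_mul] at hg hgB₀
  have hv : ∀ ξ, |(‖ψ (l * ξ)‖ ^ 2)⁻¹ - 1| ≤
      ε / (2 * (|B₀| + 1)) + ε / (2 * (|B| + 1)) * (1 + ξ ^ 2) ^ (n + 1) := by
    simpa [hψ0] using hwδ l (by rwa [abs_of_pos hl])
  have hvg := integrable_mul_of_abs_le_add_mul (by fun_prop) hg hρg (fun _ => by positivity) hv
  have hwg : Integrable (fun ξ => (‖ψ (l * ξ)‖ ^ 2)⁻¹ * ‖f t ξ‖ ^ 2) :=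
    (hvg.add hg).congr (ae_of_all _ fun ξ => by simp only [Pi.add_apply]; ring)
  rw [← integral_sub hwg hg]
  calc _ = |∫ ξ, ((‖ψ (l * ξ)‖ ^ 2)⁻¹ - 1) * ‖f t ξ‖ ^ 2| := by simp only [sub_one_mul]
    _ ≤ _ := abs_integral_mul_le_of_abs_le_add_mul hg hρg (fun _ => by positivity) hv
    _ ≤ ε / 2 + ε / 2 := add_le_add (div_two_mul_abs_add_one_mul_le hε.le hgB₀)
        (div_two_mul_abs_add_one_mul_le hε.le hρgB)
    _ = ε := add_halves ε

/-- Removing the correlation factor ψ(lξ) in a weighted L² norm as l → 0⁺,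
uniformly in t ∈ [0,T], for a family f_t with all polynomially weighted L² norms
uniformly bounded and ψ continuous, nonvanishing, ψ(0) = 1, with 1/|ψ| of at most
polynomial growth. -/
theorem stmt_19 (T : ℝ) (hT : 0 ≤ T) (f : ℝ → ℝ → ℂ)
    (hf : ∀ m : ℕ, ∃ B : ℝ, ∀ t ∈ Set.Icc (0 : ℝ) T,
      Integrable (fun ξ : ℝ => (1 + ξ ^ 2) ^ m * ‖f t ξ‖ ^ 2) ∧
      ∫ ξ : ℝ, (1 + ξ ^ 2) ^ m * ‖f t ξ‖ ^ 2 ≤ B)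
    (ψ : ℝ → ℂ) (hψcont : Continuous ψ) (hψne : ∀ ξ, ψ ξ ≠ 0) (hψ0 : ψ 0 = 1)
    (P : Polynomial ℝ) (hP : ∀ ξ : ℝ, 1 / ‖ψ ξ‖ ≤ P.eval |ξ|) :
    ∀ ε : ℝ, 0 < ε → ∃ δ : ℝ, 0 < δ ∧ ∀ l : ℝ, 0 < l → l < δ →
      ∀ t ∈ Set.Icc (0 : ℝ) T,
        |(∫ ξ : ℝ, (‖ψ (l * ξ)‖ ^ 2)⁻¹ * ‖f t ξ‖ ^ 2) - ∫ ξ : ℝ, ‖f t ξ‖ ^ 2| ≤ ε :=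
  stmt_19_general T f hf ψ hψcont hψ0 P hP
end
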